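/- Under the hypotheses of the previous statement (𝔄(λ,k)(φ,α,ψ,β) = 0 with k² − λ² ≠ 0), the components α, β, φ₃, ψ₃ satisfy the Helmholtz equations Δ(λ)α + k²α = 0, Δ(λ)β + k²β = 0, Δ(λ)φ₃ + k²φ₃ = 0, Δ(λ)ψ₃ + k²ψ₃ = 0 in Ω, where Δ(λ)u = ∂₁²u + ∂₂²u − λ²u. -/

import Mathlib

noncomputable def pd2 (i : Fin 2) (f : (Fin 2 → ℝ) → ℂ) (x : Fin 2 → ℝ) : ℂ :=
  fderiv ℝ f x (Pi.single i 1)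

noncomputable def gradl (lam : ℂ) (a : (Fin 2 → ℝ) → ℂ) (x : Fin 2 → ℝ) : Fin 3 → ℂ :=
  ![pd2 0 a x, pd2 1 a x, Complex.I * lam * a x]

noncomputable def divl (lam : ℂ) (F : (Fin 2 → ℝ) → Fin 3 → ℂ) (x : Fin 2 → ℝ) : ℂ :=
  pd2 0 (fun y => F y 0) x + pd2 1 (fun y => F y 1) x + Complex.I * lam * F x 2

noncomputable def rotl (lam : ℂ) (F : (Fin 2 → ℝ) → Fin 3 → ℂ) (x : Fin 2 → ℝ) : Fin 3 → ℂ :=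
  ![pd2 1 (fun y => F y 2) x - Complex.I * lam * F x 1,
    Complex.I * lam * F x 0 - pd2 0 (fun y => F y 2) x,
    pd2 0 (fun y => F y 1) x - pd2 1 (fun y => F y 0) x]

noncomputable def lapl (lam : ℂ) (f : (Fin 2 → ℝ) → ℂ) (x : Fin 2 → ℝ) : ℂ :=
  pd2 0 (pd2 0 f) x + pd2 1 (pd2 1 f) x - lam ^ 2 * f x

def ccross (a b : Fin 3 → ℂ) : Fin 3 → ℂ :=
  ![a 1 * b 2 - a 2 * b 1, a 2 * b 0 - a 0 * b 2, a 0 * b 1 - a 1 * b 0]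

/-!
Apply `div(λ)` and the third component of `rot(λ)` to the first-order equations
`c (rot(λ) F + ∇(λ) a) = k G` (with `c = ±i`). The identities `div(λ) rot(λ) = 0`,
`div(λ) ∇(λ) = Δ(λ)`, `(rot(λ) ∇(λ) a)₃ = 0` and `(rot(λ) rot(λ) F)₃ = iλ div(λ) F − Δ(λ) F₃`
(the first and third by symmetry of second derivatives) turn them into second-order equations,
and the remaining pencil equations eliminate the lower-order terms because `c² = −1`.
-/

open Filter Topology Complex

section

variable {lam c k : ℂ} {x : Fin 2 → ℝ} {f g a b : (Fin 2 → ℝ) → ℂ}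
  {F G : (Fin 2 → ℝ) → Fin 3 → ℂ}

lemma pd2_add (hf : DifferentiableAt ℝ f x) (hg : DifferentiableAt ℝ g x) (i : Fin 2) :
    pd2 i (fun y => f y + g y) x = pd2 i f x + pd2 i g x := by
  simp [pd2, fderiv_fun_add hf hg]

lemma pd2_sub (hf : DifferentiableAt ℝ f x) (hg : DifferentiableAt ℝ g x) (i : Fin 2) :
    pd2 i (fun y => f y - g y) x = pd2 i f x - pd2 i g x := by
  simp [pd2, fderiv_fun_sub hf hg]

lemma pd2_const_mul (c : ℂ) (f : (Fin 2 → ℝ) → ℂ) (i : Fin 2) :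
    pd2 i (fun y => c * f y) x = c * pd2 i f x := by
  rcases eq_or_ne c 0 with rfl | hc
  · simp [pd2]
  · have := invertibleOfNonzero hc
    simp [pd2, ← smul_eq_mul, ← Pi.smul_def, fderiv_const_smul_of_invertible]

lemma Filter.EventuallyEq.pd2_eq (h : f =ᶠ[𝓝 x] g) (i : Fin 2) : pd2 i f x = pd2 i g x := by
  rw [pd2, pd2, h.fderiv_eq]

lemma ContDiffAt.differentiableAt_pd2 (hf : ContDiffAt ℝ 2 f x) (i : Fin 2) :
    DifferentiableAt ℝ (pd2 i f) x :=
  ((hf.fderiv_right (m := 1) (by norm_num)).clm_apply contDiffAt_const).differentiableAt one_ne_zero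

lemma pd2_pd2_comm (hf : ContDiffAt ℝ 2 f x) (i j : Fin 2) :
    pd2 i (pd2 j f) x = pd2 j (pd2 i f) x := by
  have hd : DifferentiableAt ℝ (fderiv ℝ f) x :=
    (hf.fderiv_right (m := 1) (by norm_num)).differentiableAt one_ne_zero
  have hsnd : ∀ p q : Fin 2,
      pd2 p (pd2 q f) x = fderiv ℝ (fderiv ℝ f) x (Pi.single p 1) (Pi.single q 1) := by
    intro p q
    change fderiv ℝ (fun y => fderiv ℝ f y (Pi.single q 1)) x (Pi.single p 1) = _
    simp [fderiv_clm_apply hd (differentiableAt_const _)]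
  rw [hsnd, hsnd]
  exact hf.isSymmSndFDerivAt (by simp) _ _

lemma Filter.EventuallyEq.divl_eq (h : F =ᶠ[𝓝 x] G) (lam : ℂ) : divl lam F x = divl lam G x := by
  have hj : ∀ j, (fun y => F y j) =ᶠ[𝓝 x] fun y => G y j := fun j =>
    h.mono fun y hy => congrFun hy j
  simp only [divl, (hj 0).pd2_eq, (hj 1).pd2_eq, h.eq_of_nhds]

lemma Filter.EventuallyEq.rotl_eq (h : F =ᶠ[𝓝 x] G) (lam : ℂ) : rotl lam F x = rotl lam G x := by
  have hj : ∀ j, (fun y => F y j) =ᶠ[𝓝 x] fun y => G y j := fun j =>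
    h.mono fun y hy => congrFun hy j
  simp only [rotl, (hj 0).pd2_eq, (hj 1).pd2_eq, (hj 2).pd2_eq, h.eq_of_nhds]

lemma ContDiffAt.differentiableAt_rotl (hF : ContDiffAt ℝ 2 F x) (lam : ℂ) :
    DifferentiableAt ℝ (rotl lam F) x := by
  have hd : ∀ j, DifferentiableAt ℝ (fun y => F y j) x := fun j =>
    ((contDiffAt_pi.1 hF j).differentiableAt two_ne_zero)
  have hd' : ∀ i j, DifferentiableAt ℝ (pd2 i fun y => F y j) x := fun i j =>
    (contDiffAt_pi.1 hF j).differentiableAt_pd2 i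
  refine differentiableAt_pi.2 fun j => ?_
  fin_cases j <;>
    simp only [rotl, Fin.zero_eta, Fin.mk_one, Fin.reduceFinMk, Matrix.cons_val_zero,
      Matrix.cons_val_one, Matrix.cons_val] <;>
    fun_prop

lemma ContDiffAt.differentiableAt_gradl (ha : ContDiffAt ℝ 2 a x) (lam : ℂ) :
    DifferentiableAt ℝ (gradl lam a) x := by
  have hd := ha.differentiableAt two_ne_zero
  have hd' := ha.differentiableAt_pd2
  refine differentiableAt_pi.2 fun j => ?_
  fin_cases j <;>
    simp only [gradl, Fin.zero_eta, Fin.mk_one, Fin.reduceFinMk, Matrix.cons_val_zero,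
      Matrix.cons_val_one, Matrix.cons_val] <;>
    fun_prop

lemma divl_add (hF : DifferentiableAt ℝ F x) (hG : DifferentiableAt ℝ G x) (lam : ℂ) :
    divl lam (F + G) x = divl lam F x + divl lam G x := by
  have hF' := differentiableAt_pi.1 hF
  have hG' := differentiableAt_pi.1 hG
  simp only [divl, Pi.add_apply, pd2_add (hF' _) (hG' _)]
  ring

lemma divl_const_smul (c lam : ℂ) (F : (Fin 2 → ℝ) → Fin 3 → ℂ) :
    divl lam (c • F) x = c * divl lam F x := by
  simp only [divl, Pi.smul_apply, smul_eq_mul, pd2_const_mul]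
  ring

lemma rotl_add (hF : DifferentiableAt ℝ F x) (hG : DifferentiableAt ℝ G x) (lam : ℂ) :
    rotl lam (F + G) x = rotl lam F x + rotl lam G x := by
  have hF' := differentiableAt_pi.1 hF
  have hG' := differentiableAt_pi.1 hG
  ext j
  fin_cases j <;>
    simp only [rotl, Pi.add_apply, pd2_add (hF' _) (hG' _), Fin.zero_eta, Fin.mk_one,
      Fin.reduceFinMk, Matrix.cons_val_zero, Matrix.cons_val_one, Matrix.cons_val] <;>
    ring

lemma rotl_const_smul (c lam : ℂ) (F : (Fin 2 → ℝ) → Fin 3 → ℂ) :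
    rotl lam (c • F) x = c • rotl lam F x := by
  ext j
  fin_cases j <;>
    simp only [rotl, Pi.smul_apply, smul_eq_mul, pd2_const_mul, Fin.zero_eta, Fin.mk_one,
      Fin.reduceFinMk, Matrix.cons_val_zero, Matrix.cons_val_one, Matrix.cons_val] <;>
    ring

lemma divl_gradl (lam : ℂ) : divl lam (gradl lam a) x = lapl lam a x := by
  simp only [divl, gradl, lapl, Matrix.cons_val_zero, Matrix.cons_val_one, Matrix.cons_val_two,
    Matrix.head_cons, Matrix.tail_cons]
  linear_combination (lam ^ 2 * a x) * I_mul_I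

lemma divl_rotl (hF : ContDiffAt ℝ 2 F x) (lam : ℂ) : divl lam (rotl lam F) x = 0 := by
  have hd : ∀ j, DifferentiableAt ℝ (fun y => F y j) x := fun j =>
    ((contDiffAt_pi.1 hF j).differentiableAt two_ne_zero)
  have hd' : ∀ i j, DifferentiableAt ℝ (pd2 i fun y => F y j) x := fun i j =>
    (contDiffAt_pi.1 hF j).differentiableAt_pd2 i
  simp only [divl, rotl, Matrix.cons_val_zero, Matrix.cons_val_one, Matrix.cons_val_two,
    Matrix.head_cons, Matrix.tail_cons]
  simp (disch := fun_prop) only [pd2_sub, pd2_const_mul]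
  rw [pd2_pd2_comm (contDiffAt_pi.1 hF 2) 0 1]
  ring

lemma rotl_rotl_apply_two (hF : ContDiffAt ℝ 2 F x) (lam : ℂ) :
    rotl lam (rotl lam F) x 2 = I * lam * divl lam F x - lapl lam (fun y => F y 2) x := by
  have hd : ∀ j, DifferentiableAt ℝ (fun y => F y j) x := fun j =>
    ((contDiffAt_pi.1 hF j).differentiableAt two_ne_zero)
  have hd' : ∀ i j, DifferentiableAt ℝ (pd2 i fun y => F y j) x := fun i j =>
    (contDiffAt_pi.1 hF j).differentiableAt_pd2 i
  simp only [divl, rotl, lapl, Matrix.cons_val_zero, Matrix.cons_val_one, Matrix.cons_val_two,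
    Matrix.head_cons, Matrix.tail_cons]
  simp (disch := fun_prop) only [pd2_sub, pd2_const_mul]
  linear_combination (-lam ^ 2 * F x 2) * I_mul_I

lemma rotl_gradl_apply_two (ha : ContDiffAt ℝ 2 a x) (lam : ℂ) :
    rotl lam (gradl lam a) x 2 = 0 := by
  simp only [rotl, gradl, Matrix.cons_val_zero, Matrix.cons_val_one, Matrix.cons_val_two,
    Matrix.head_cons, Matrix.tail_cons, pd2_pd2_comm ha 0 1, sub_self]

lemma helmholtz_of_divl (hc : c ^ 2 = -1) (hF : ContDiffAt ℝ 2 F x) (ha : ContDiffAt ℝ 2 a x)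
    (hrot : c • (rotl lam F + gradl lam a) =ᶠ[𝓝 x] k • G) (hdiv : c * divl lam G x = k * a x) :
    lapl lam a x + k ^ 2 * a x = 0 := by
  have h := hrot.divl_eq lam
  rw [divl_const_smul, divl_const_smul, divl_add (hF.differentiableAt_rotl lam)
    (ha.differentiableAt_gradl lam), divl_rotl hF, divl_gradl, zero_add] at h
  linear_combination (-c) * h - k * hdiv + lapl lam a x * hc

lemma helmholtz_of_rotl_apply_two (hc : c ^ 2 = -1) (hF : ContDiffAt ℝ 2 F x)
    (ha : ContDiffAt ℝ 2 a x) (hrot : c • (rotl lam F + gradl lam a) =ᶠ[𝓝 x] k • G)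
    (hrot₂ : -c * (rotl lam G x 2 + gradl lam b x 2) = k * F x 2)
    (hdiv : -c * divl lam F x = k * b x) :
    lapl lam (fun y => F y 2) x + k ^ 2 * F x 2 = 0 := by
  have h := congrFun (hrot.rotl_eq lam) 2
  rw [rotl_const_smul, rotl_const_smul, rotl_add (hF.differentiableAt_rotl lam)
    (ha.differentiableAt_gradl lam)] at h
  simp only [Pi.smul_apply, Pi.add_apply, smul_eq_mul, rotl_rotl_apply_two hF,
    rotl_gradl_apply_two ha, add_zero] at h
  simp only [gradl, Matrix.cons_val_two, Matrix.tail_cons, Matrix.head_cons] at hrot₂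
  linear_combination c * h - k * hrot₂ + I * lam * c * hdiv + lapl lam (fun y => F y 2) x * hc

end

theorem pencil_axial_helmholtz_general
    (Ω : Set (Fin 2 → ℝ)) (hΩ : IsOpen Ω) (k lam : ℂ)
    (φ ψ : (Fin 2 → ℝ) → Fin 3 → ℂ) (α β : (Fin 2 → ℝ) → ℂ)
    (hφ : ContDiffOn ℝ (⊤ : ℕ∞) φ Ω) (hψ : ContDiffOn ℝ (⊤ : ℕ∞) ψ Ω)
    (hα : ContDiffOn ℝ (⊤ : ℕ∞) α Ω) (hβ : ContDiffOn ℝ (⊤ : ℕ∞) β Ω)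
    (e1 : ∀ x ∈ Ω, ∀ j, Complex.I * rotl lam ψ x j + Complex.I * gradl lam β x j - k * φ x j = 0)
    (e2 : ∀ x ∈ Ω, -Complex.I * divl lam ψ x - k * α x = 0)
    (e3 : ∀ x ∈ Ω, ∀ j, -Complex.I * rotl lam φ x j - Complex.I * gradl lam α x j - k * ψ x j = 0)
    (e4 : ∀ x ∈ Ω, Complex.I * divl lam φ x - k * β x = 0) :
    ∀ x ∈ Ω,
      lapl lam α x + k ^ 2 * α x = 0 ∧
      lapl lam β x + k ^ 2 * β x = 0 ∧
      lapl lam (fun y => φ y 2) x + k ^ 2 * φ x 2 = 0 ∧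
      lapl lam (fun y => ψ y 2) x + k ^ 2 * ψ x 2 = 0 := by
  intro x hx
  have hxΩ : Ω ∈ 𝓝 x := hΩ.mem_nhds hx
  have h2 : (2 : WithTop ℕ∞) ≤ (⊤ : ℕ∞) := WithTop.coe_le_coe.2 le_top
  have hφx : ContDiffAt ℝ 2 φ x := (hφ.contDiffAt hxΩ).of_le h2
  have hψx : ContDiffAt ℝ 2 ψ x := (hψ.contDiffAt hxΩ).of_le h2
  have hαx : ContDiffAt ℝ 2 α x := (hα.contDiffAt hxΩ).of_le h2
  have hβx : ContDiffAt ℝ 2 β x := (hβ.contDiffAt hxΩ).of_le h2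
  have hE₁ : I • (rotl lam ψ + gradl lam β) =ᶠ[𝓝 x] k • φ :=
    eventually_of_mem hxΩ fun y hy => funext fun j => by
      simp only [Pi.smul_apply, Pi.add_apply, smul_eq_mul]
      linear_combination e1 y hy j
  have hE₃ : (-I) • (rotl lam φ + gradl lam α) =ᶠ[𝓝 x] k • ψ :=
    eventually_of_mem hxΩ fun y hy => funext fun j => by
      simp only [Pi.smul_apply, Pi.add_apply, smul_eq_mul]
      linear_combination e3 y hy j
  have hI : I ^ 2 = -1 := I_sq
  have hnegI : (-I) ^ 2 = -1 := by rw [neg_sq, I_sq]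
  refine ⟨?_, ?_, ?_, ?_⟩
  · exact helmholtz_of_divl hnegI hφx hαx hE₃ (by linear_combination e2 x hx)
  · exact helmholtz_of_divl hI hψx hβx hE₁ (by linear_combination e4 x hx)
  · exact helmholtz_of_rotl_apply_two hnegI hφx hαx hE₃ (by linear_combination e1 x hx 2)
      (by linear_combination e4 x hx)
  · exact helmholtz_of_rotl_apply_two hI hψx hβx hE₁ (by linear_combination e3 x hx 2)
      (by linear_combination e2 x hx)

/-- the axial components of an eigenvector of the augmented pencil
𝔄(λ,k) satisfy Helmholtz equations. -/
theorem pencil_axial_helmholtz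
    (Ω : Set (Fin 2 → ℝ)) (hΩ : IsOpen Ω) (k lam : ℂ) (hklam : k ^ 2 - lam ^ 2 ≠ 0)
    (φ ψ : (Fin 2 → ℝ) → Fin 3 → ℂ) (α β : (Fin 2 → ℝ) → ℂ)
    (hφ : ContDiffOn ℝ (⊤ : ℕ∞) φ Ω) (hψ : ContDiffOn ℝ (⊤ : ℕ∞) ψ Ω)
    (hα : ContDiffOn ℝ (⊤ : ℕ∞) α Ω) (hβ : ContDiffOn ℝ (⊤ : ℕ∞) β Ω)
    (e1 : ∀ x ∈ Ω, ∀ j, Complex.I * rotl lam ψ x j + Complex.I * gradl lam β x j - k * φ x j = 0)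
    (e2 : ∀ x ∈ Ω, -Complex.I * divl lam ψ x - k * α x = 0)
    (e3 : ∀ x ∈ Ω, ∀ j, -Complex.I * rotl lam φ x j - Complex.I * gradl lam α x j - k * ψ x j = 0)
    (e4 : ∀ x ∈ Ω, Complex.I * divl lam φ x - k * β x = 0) :
    ∀ x ∈ Ω,
      lapl lam α x + k ^ 2 * α x = 0 ∧
      lapl lam β x + k ^ 2 * β x = 0 ∧
      lapl lam (fun y => φ y 2) x + k ^ 2 * φ x 2 = 0 ∧
      lapl lam (fun y => ψ y 2) x + k ^ 2 * ψ x 2 = 0 :=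
  pencil_axial_helmholtz_general Ω hΩ k lam φ ψ α β hφ hψ hα hβ e1 e2 e3 e4
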